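/- arXiv:2008.06844 — 5 statements merged into one kernel-verified Lean document; each statement's English description precedes it below -/
import Mathlib

section
/- Suppose there exist feasible solutions x̄, ȳ of BP with x̄ + ȳ ≤ e. Let d ∈ ℝ^{3n}, d₀ ∈ ℝ satisfy d^T(x̄ ⊕ ȳ ⊕ z̄) = d₀ for all feasible solutions x̄ ⊕ ȳ ⊕ z̄ of BPD'. Decompose d = d_x ⊕ d_y ⊕ d_z with d_x, d_y, d_z ∈ ℝ^n. Then d_z = 0, and there exist constants c_x, c_y ∈ ℝ such that d_x^T x̄ = c_x and d_y^T ȳ = c_y for all feasible solutions x̄, ȳ of BP. -/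
open Matrix Finset

def BinaryVec {n : ℕ} (x : Fin n → ℝ) : Prop := ∀ i, x i = 0 ∨ x i = 1

/-- Feasibility for BP: `Ax ≤ b`, `x ∈ {0,1}ⁿ`. -/
def FeasBP {n m : ℕ} (A : Matrix (Fin m) (Fin n) ℝ) (b : Fin m → ℝ)
    (x : Fin n → ℝ) : Prop :=
  BinaryVec x ∧ A.mulVec x ≤ b

/-- Feasibility for BPD' : `Ax ≤ b`, `Ay ≤ b`, `x + y - z ≤ e`, `x, y, z ∈ {0,1}ⁿ`. -/
def FeasBPD' {n m : ℕ} (A : Matrix (Fin m) (Fin n) ℝ) (b : Fin m → ℝ)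
    (x y z : Fin n → ℝ) : Prop :=
  FeasBP A b x ∧ FeasBP A b y ∧ BinaryVec z ∧ (∀ i, x i + y i - z i ≤ 1)

theorem stmt8 {n m : ℕ} (A : Matrix (Fin m) (Fin n) ℝ) (b : Fin m → ℝ)
    (hne : ∃ x, FeasBP A b x)
    (hcomp : ∃ x y, FeasBP A b x ∧ FeasBP A b y ∧ ∀ i, x i + y i ≤ 1)
    (dx dy dz : Fin n → ℝ) (d₀ : ℝ)
    (hd : ∀ x y z, FeasBPD' A b x y z →
      (∑ i, dx i * x i) + (∑ i, dy i * y i) + (∑ i, dz i * z i) = d₀) :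
    dz = 0 ∧ ∃ cx cy : ℝ,
      (∀ x, FeasBP A b x → ∑ i, dx i * x i = cx) ∧
      (∀ y, FeasBP A b y → ∑ i, dy i * y i = cy) := by
  obtain ⟨x0, y0, hx0, hy0, hxy0⟩ := hcomp
  have hz0 : ∀ j, dz j = 0 := by
    intro j
    have h1 := hd x0 y0 0 ⟨hx0, hy0, fun i => Or.inl rfl, fun i => by
      simpa using hxy0 i⟩
    have h2 := hd x0 y0 (fun i => if i = j then 1 else 0)
      ⟨hx0, hy0, fun i => by by_cases h : i = j <;> simp [h], fun i => by
        by_cases h : i = j <;> simp [h] <;> linarith [hxy0 i, hxy0 j]⟩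
    have e1 : (∑ i, dz i * (0 : Fin n → ℝ) i) = 0 := by simp
    have e2 : (∑ i, dz i * (if i = j then (1:ℝ) else 0)) = dz j := by
      simp [mul_ite]
    rw [e1] at h1
    rw [e2] at h2
    linarith
  have key : ∀ x y, FeasBP A b x → FeasBP A b y →
      (∑ i, dx i * x i) + (∑ i, dy i * y i) = d₀ := by
    intro x y hx hy
    have hfe : FeasBPD' A b x y (fun i => x i * y i) := by
      refine ⟨hx, hy, fun i => ?_, fun i => ?_⟩
      · rcases hx.1 i with h | h <;> rcases hy.1 i with h' | h' <;>
          simp [h, h']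
      · rcases hx.1 i with h | h <;> rcases hy.1 i with h' | h' <;>
          simp [h, h']
    have := hd x y (fun i => x i * y i) hfe
    have hz : (∑ i, dz i * (x i * y i)) = 0 := by simp [hz0]
    linarith
  obtain ⟨w, hw⟩ := hne
  refine ⟨funext hz0, d₀ - ∑ i, dy i * w i, d₀ - ∑ i, dx i * w i, ?_, ?_⟩
  · intro x hx
    have := key x w hx hw
    linarith
  · intro y hy
    have := key w y hw hy
    linarith
end

section
/- Suppose there exist feasible solutions x̄, ȳ of BP with x̄ + ȳ ≤ e. If the polytope P_BP (the convex hull of the feasible set of BP in ℝ^n) is full dimensional, then the diameter polytope P_BPD' ⊆ ℝ^{3n} is full dimensional, i.e., dim P_BPD' = 3n. -/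
open Matrix Finset

/-- The polytope underlying BP: the convex hull of its feasible set. -/
def polyBP {n m : ℕ} (A : Matrix (Fin m) (Fin n) ℝ) (b : Fin m → ℝ) :
    Set (Fin n → ℝ) :=
  convexHull ℝ {x | FeasBP A b x}

/-- The diameter polytope `P_BPD'` in `ℝⁿ × ℝⁿ × ℝⁿ ≅ ℝ^{3n}`. -/
def polyBPD' {n m : ℕ} (A : Matrix (Fin m) (Fin n) ℝ) (b : Fin m → ℝ) :
    Set ((Fin n → ℝ) × (Fin n → ℝ) × (Fin n → ℝ)) :=
  convexHull ℝ {p | FeasBPD' A b p.1 p.2.1 p.2.2}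

/-- The dimension of a polytope: the dimension of its affine hull. -/
noncomputable def polyDim {V : Type*} [AddCommGroup V] [Module ℝ V]
    (P : Set V) : ℕ :=
  Module.finrank ℝ (affineSpan ℝ P).direction

/-- `f p ≤ a₀` is a facet-defining inequality of `P`: it is valid on `P` and the
face it defines is nonempty of dimension `dim P - 1`. -/
noncomputable def IsFacet {V : Type*} [AddCommGroup V] [Module ℝ V]
    (P : Set V) (f : V → ℝ) (a₀ : ℝ) : Prop :=
  (∀ p ∈ P, f p ≤ a₀) ∧ ({p ∈ P | f p = a₀}).Nonempty ∧
    polyDim {p ∈ P | f p = a₀} + 1 = polyDim P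

theorem stmt9 {n m : ℕ} (A : Matrix (Fin m) (Fin n) ℝ) (b : Fin m → ℝ)
    (hne : ∃ x, FeasBP A b x)
    (hcomp : ∃ x y, FeasBP A b x ∧ FeasBP A b y ∧ ∀ i, x i + y i ≤ 1)
    (hfull : polyDim (polyBP A b) = n) :
    polyDim (polyBPD' A b) = 3 * n := by
  classical
  obtain ⟨x₀, y₀, hx₀, hy₀, hcp⟩ := hcomp
  set T : Set (Fin n → ℝ) := {x | FeasBP A b x} with hT
  set S : Set ((Fin n → ℝ) × (Fin n → ℝ) × (Fin n → ℝ)) :=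
    {p | FeasBPD' A b p.1 p.2.1 p.2.2} with hS
  have hbin_le : ∀ (x : Fin n → ℝ), BinaryVec x → ∀ i, x i ≤ 1 := by
    intro x hx i; rcases hx i with h | h <;> simp [h]
  have hone : BinaryVec (fun _ : Fin n => (1:ℝ)) := fun i => Or.inr rfl
  have hmem1 : ∀ x, FeasBP A b x →
      ((x, y₀, fun _ => (1:ℝ)) : (Fin n → ℝ) × (Fin n → ℝ) × (Fin n → ℝ)) ∈ S := by
    intro x hx
    refine ⟨hx, hy₀, hone, fun i => ?_⟩
    have h1 := hbin_le x hx.1 i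
    have h2 := hbin_le y₀ hy₀.1 i
    simp only []
    linarith
  have hmem2 : ∀ y, FeasBP A b y →
      ((x₀, y, fun _ => (1:ℝ)) : (Fin n → ℝ) × (Fin n → ℝ) × (Fin n → ℝ)) ∈ S := by
    intro y hy
    refine ⟨hx₀, hy, hone, fun i => ?_⟩
    have h1 := hbin_le x₀ hx₀.1 i
    have h2 := hbin_le y hy.1 i
    simp only []
    linarith
  have hmem3 : ∀ z : Fin n → ℝ, BinaryVec z →
      ((x₀, y₀, z) : (Fin n → ℝ) × (Fin n → ℝ) × (Fin n → ℝ)) ∈ S := by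
    intro z hz
    refine ⟨hx₀, hy₀, hz, fun i => ?_⟩
    have h1 := hcp i
    rcases hz i with h | h <;> simp only [h] <;> linarith
  have hfin : Module.finrank ℝ (Fin n → ℝ) = n := by
    simp
  have hTtop : vectorSpan ℝ T = ⊤ := by
    apply Submodule.eq_top_of_finrank_eq
    have hd : Module.finrank ℝ (vectorSpan ℝ T) = n := by
      have h := hfull
      unfold polyDim polyBP at h
      rwa [affineSpan_convexHull, direction_affineSpan] at h
    rw [hd, hfin]
  have h1 : ∀ u : Fin n → ℝ,
      ((u, 0, 0) : (Fin n → ℝ) × (Fin n → ℝ) × (Fin n → ℝ)) ∈ vectorSpan ℝ S := by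
    intro u
    have hu : u ∈ vectorSpan ℝ T := by rw [hTtop]; trivial
    rw [vectorSpan_def] at hu
    induction hu using Submodule.span_induction with
    | mem v hv =>
      obtain ⟨p, hp, q, hq, rfl⟩ := hv
      have he : ((p -ᵥ q, 0, 0) : (Fin n → ℝ) × (Fin n → ℝ) × (Fin n → ℝ)) =
          ((p, y₀, fun _ => (1:ℝ))) -ᵥ ((q, y₀, fun _ => (1:ℝ))) := by
        simp [Prod.ext_iff, vsub_eq_sub]
      rw [he]
      exact vsub_mem_vectorSpan ℝ (hmem1 p hp) (hmem1 q hq)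
    | zero => exact (vectorSpan ℝ S).zero_mem
    | add v w _ _ hv hw =>
      have he : ((v + w, 0, 0) : (Fin n → ℝ) × (Fin n → ℝ) × (Fin n → ℝ)) =
          (v, 0, 0) + (w, 0, 0) := by simp [Prod.ext_iff]
      rw [he]; exact (vectorSpan ℝ S).add_mem hv hw
    | smul c v _ hv =>
      have he : ((c • v, 0, 0) : (Fin n → ℝ) × (Fin n → ℝ) × (Fin n → ℝ)) =
          c • ((v, 0, 0) : (Fin n → ℝ) × (Fin n → ℝ) × (Fin n → ℝ)) := by
        simp [Prod.ext_iff]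
      rw [he]; exact (vectorSpan ℝ S).smul_mem c hv
  have h2 : ∀ u : Fin n → ℝ,
      ((0, u, 0) : (Fin n → ℝ) × (Fin n → ℝ) × (Fin n → ℝ)) ∈ vectorSpan ℝ S := by
    intro u
    have hu : u ∈ vectorSpan ℝ T := by rw [hTtop]; trivial
    rw [vectorSpan_def] at hu
    induction hu using Submodule.span_induction with
    | mem v hv =>
      obtain ⟨p, hp, q, hq, rfl⟩ := hv
      have he : ((0, p -ᵥ q, 0) : (Fin n → ℝ) × (Fin n → ℝ) × (Fin n → ℝ)) =
          ((x₀, p, fun _ => (1:ℝ))) -ᵥ ((x₀, q, fun _ => (1:ℝ))) := by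
        simp [Prod.ext_iff, vsub_eq_sub]
      rw [he]
      exact vsub_mem_vectorSpan ℝ (hmem2 p hp) (hmem2 q hq)
    | zero => exact (vectorSpan ℝ S).zero_mem
    | add v w _ _ hv hw =>
      have he : ((0, v + w, 0) : (Fin n → ℝ) × (Fin n → ℝ) × (Fin n → ℝ)) =
          (0, v, 0) + (0, w, 0) := by simp [Prod.ext_iff]
      rw [he]; exact (vectorSpan ℝ S).add_mem hv hw
    | smul c v _ hv =>
      have he : ((0, c • v, 0) : (Fin n → ℝ) × (Fin n → ℝ) × (Fin n → ℝ)) =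
          c • ((0, v, 0) : (Fin n → ℝ) × (Fin n → ℝ) × (Fin n → ℝ)) := by
        simp [Prod.ext_iff]
      rw [he]; exact (vectorSpan ℝ S).smul_mem c hv
  have hsingle : ∀ i : Fin n, BinaryVec (Pi.single i (1:ℝ)) := by
    intro i j
    rcases eq_or_ne j i with h | h
    · subst h; right; simp
    · left; simp [Pi.single_apply, h]
  have h3e : ∀ i : Fin n,
      ((0, 0, Pi.single i (1:ℝ)) : (Fin n → ℝ) × (Fin n → ℝ) × (Fin n → ℝ)) ∈
        vectorSpan ℝ S := by
    intro i
    have hz0 : BinaryVec (0 : Fin n → ℝ) := fun _ => Or.inl rfl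
    have he : ((0, 0, Pi.single i (1:ℝ)) : (Fin n → ℝ) × (Fin n → ℝ) × (Fin n → ℝ)) =
        ((x₀, y₀, Pi.single i (1:ℝ))) -ᵥ ((x₀, y₀, (0 : Fin n → ℝ))) := by
      simp [Prod.ext_iff, vsub_eq_sub]
    rw [he]
    exact vsub_mem_vectorSpan ℝ (hmem3 _ (hsingle i)) (hmem3 _ hz0)
  have h3 : ∀ w : Fin n → ℝ,
      ((0, 0, w) : (Fin n → ℝ) × (Fin n → ℝ) × (Fin n → ℝ)) ∈ vectorSpan ℝ S := by
    intro w
    have hw : ((0, 0, w) : (Fin n → ℝ) × (Fin n → ℝ) × (Fin n → ℝ)) =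
        ∑ i : Fin n, w i • ((0, 0, Pi.single i (1:ℝ)) :
          (Fin n → ℝ) × (Fin n → ℝ) × (Fin n → ℝ)) := by
      rw [Prod.ext_iff, Prod.ext_iff]
      refine ⟨?_, ?_, ?_⟩ <;> simp only [Prod.fst_sum, Prod.snd_sum, Prod.smul_mk]
      · simp
      · simp
      · funext j
        simp [Finset.sum_apply, Pi.single_apply, Finset.sum_ite_eq']
    rw [hw]
    exact Submodule.sum_mem _ fun i _ => (vectorSpan ℝ S).smul_mem _ (h3e i)
  have hStop : vectorSpan ℝ S = ⊤ := by
    rw [eq_top_iff]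
    rintro ⟨u, v, w⟩ -
    have he : ((u, v, w) : (Fin n → ℝ) × (Fin n → ℝ) × (Fin n → ℝ)) =
        (u, 0, 0) + (0, v, 0) + (0, 0, w) := by simp [Prod.ext_iff]
    rw [he]
    exact (vectorSpan ℝ S).add_mem ((vectorSpan ℝ S).add_mem (h1 u) (h2 v)) (h3 w)
  unfold polyDim polyBPD'
  rw [affineSpan_convexHull, direction_affineSpan,
    show {p : (Fin n → ℝ) × (Fin n → ℝ) × (Fin n → ℝ) | FeasBPD' A b p.1 p.2.1 p.2.2} = S
      from rfl, hStop, finrank_top]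
  rw [Module.finrank_prod, Module.finrank_prod, hfin]
  ring
end

section
/- Suppose there exist feasible x̄, ȳ of BP with x̄ + ȳ ≤ e, and suppose Mx = d with M ∈ ℝ^{m×n} of full row rank is a minimal equation system of P_BP. Then dim P_BPD' = 3n − 2·rank(M). -/
/-!
The direction of the affine hull of `P_BPD'` is `{(x, y, z) | M x = 0, M y = 0}`, of dimension
`3n - 2k` since `(x, y, z) ↦ (M x, M y)` is onto. Differences of feasible triples lie in it
because `M x = d` on BP. Conversely, let `φ = φ₁ ⊕ φ₂ ⊕ φ₃` be a functional constant on the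
feasible triples. As `(x̄, ȳ, z)` is feasible for every binary `z`, `φ₃ = 0`; as `(x, ȳ, e)` and
`(x̄, y, e)` are feasible for all feasible `x`, `y`, the functionals `φ₁`, `φ₂` are constant on BP,
so by minimality of `M x = d` they are combinations of rows of `M` and vanish on `ker M`.
-/

open Matrix Finset

theorem BinaryVec.nonneg {n : ℕ} {x : Fin n → ℝ} (hx : BinaryVec x) (i : Fin n) : 0 ≤ x i := by
  rcases hx i with h | h <;> simp [h]

theorem BinaryVec.le_one {n : ℕ} {x : Fin n → ℝ} (hx : BinaryVec x) (i : Fin n) : x i ≤ 1 := by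
  rcases hx i with h | h <;> simp [h]

theorem BinaryVec.zero (n : ℕ) : BinaryVec (0 : Fin n → ℝ) := fun _ => Or.inl rfl

theorem BinaryVec.one (n : ℕ) : BinaryVec (1 : Fin n → ℝ) := fun _ => Or.inr rfl

theorem BinaryVec.single {n : ℕ} (i : Fin n) : BinaryVec (Pi.single i 1 : Fin n → ℝ) := by
  intro j
  rcases eq_or_ne j i with rfl | h <;> simp [*]

section Feasibility

variable {n m : ℕ} {A : Matrix (Fin m) (Fin n) ℝ} {b : Fin m → ℝ} {x y z : Fin n → ℝ}

theorem FeasBP.feasBPD'_one (hx : FeasBP A b x) (hy : FeasBP A b y) : FeasBPD' A b x y 1 :=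
  ⟨hx, hy, BinaryVec.one n, fun i => by
    simp only [Pi.one_apply]; linarith [hx.1.le_one i, hy.1.le_one i]⟩

theorem FeasBP.feasBPD'_of_add_le_one (hx : FeasBP A b x) (hy : FeasBP A b y)
    (hxy : ∀ i, x i + y i ≤ 1) (hz : BinaryVec z) : FeasBPD' A b x y z :=
  ⟨hx, hy, hz, fun i => by linarith [hxy i, hz.nonneg i]⟩

end Feasibility

theorem Module.Dual.apply_eq_sum_mul {K : Type*} [Field K] {n : ℕ}
    (ψ : Module.Dual K (Fin n → K)) (x : Fin n → K) :
    ψ x = ∑ i, ψ (Pi.single i 1) * x i := by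
  conv_lhs => rw [← Finset.univ_sum_single x]
  simp only [map_sum]
  refine Finset.sum_congr rfl fun i _ => ?_
  rw [mul_comm, ← smul_eq_mul, ← _root_.map_smul, ← Pi.single_smul, smul_eq_mul, mul_one]

theorem Module.Dual.apply_eq_zero_of_mulVec_eq_zero {K : Type*} [Field K] {n k : ℕ}
    {X : Set (Fin n → K)} {M : Matrix (Fin k) (Fin n) K}
    (hrow : ∀ (u : Fin n → K) (u₀ : K), (∀ x ∈ X, ∑ i, u i * x i = u₀) → ∃ lam, u = M.vecMul lam)
    (ψ : Module.Dual K (Fin n → K)) {c : K} (hψ : ∀ x ∈ X, ψ x = c)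
    {v : Fin n → K} (hv : M *ᵥ v = 0) : ψ v = 0 := by
  obtain ⟨lam, hlam⟩ := hrow (fun i => ψ (Pi.single i 1)) c
    fun x hx => (ψ.apply_eq_sum_mul x).symm.trans (hψ x hx)
  calc ψ v = M.vecMul lam ⬝ᵥ v := by rw [ψ.apply_eq_sum_mul, ← hlam]; rfl
    _ = lam ⬝ᵥ M *ᵥ v := (dotProduct_mulVec lam M v).symm
    _ = 0 := by rw [hv, dotProduct_zero]

theorem le_vectorSpan_of_forall_dual {K V : Type*} [Field K] [AddCommGroup V] [Module K V]
    {S : Set V} {W : Submodule K V}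
    (h : ∀ φ : Module.Dual K V, (∀ p ∈ S, ∀ q ∈ S, φ (p - q) = 0) → ∀ w ∈ W, φ w = 0) :
    W ≤ vectorSpan K S := by
  intro w hw
  by_contra hw'
  obtain ⟨φ, hφw, hφ⟩ := Submodule.exists_dual_map_eq_bot_of_notMem hw' inferInstance
  rw [← LinearMap.le_ker_iff_map] at hφ
  exact hφw (h φ (fun p hp q hq => hφ (vsub_mem_vectorSpan K hp hq)) w hw)

theorem polyDim_convexHull {V : Type*} [AddCommGroup V] [Module ℝ V] (s : Set V) :
    polyDim (convexHull ℝ s) = Module.finrank ℝ (vectorSpan ℝ s) := by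
  rw [polyDim, affineSpan_convexHull, direction_affineSpan]

theorem Matrix.mulVecLin_surjective_of_rank_eq {K : Type*} [Field K] {n k : ℕ}
    {M : Matrix (Fin k) (Fin n) K} (hM : M.rank = k) : Function.Surjective M.mulVecLin := by
  rw [← LinearMap.range_eq_top]
  apply Submodule.eq_top_of_finrank_eq
  rw [Module.finrank_fin_fun]
  exact hM

noncomputable def pairMulVecLin {K : Type*} [Field K] {n k : ℕ} (M : Matrix (Fin k) (Fin n) K) :
    (Fin n → K) × (Fin n → K) × (Fin n → K) →ₗ[K] (Fin k → K) × (Fin k → K) :=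
  M.mulVecLin.prodMap (M.mulVecLin ∘ₗ LinearMap.fst K _ _)

theorem pairMulVecLin_apply {K : Type*} [Field K] {n k : ℕ} (M : Matrix (Fin k) (Fin n) K)
    (p : (Fin n → K) × (Fin n → K) × (Fin n → K)) :
    pairMulVecLin M p = (M *ᵥ p.1, M *ᵥ p.2.1) := rfl

theorem finrank_ker_pairMulVecLin {K : Type*} [Field K] {n k : ℕ}
    {M : Matrix (Fin k) (Fin n) K} (hM : M.rank = k) :
    Module.finrank K (LinearMap.ker (pairMulVecLin M)) = 3 * n - 2 * k := by
  have hsurj : Function.Surjective (pairMulVecLin M) :=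
    (M.mulVecLin_surjective_of_rank_eq hM).prodMap
      ((M.mulVecLin_surjective_of_rank_eq hM).comp Prod.fst_surjective)
  have := LinearMap.finrank_range_add_finrank_ker (pairMulVecLin M)
  rw [LinearMap.range_eq_top.mpr hsurj, finrank_top] at this
  simp only [Module.finrank_prod, Module.finrank_fin_fun] at this
  omega

section Diameter

variable {n m k : ℕ} {A : Matrix (Fin m) (Fin n) ℝ} {b : Fin m → ℝ} {M : Matrix (Fin k) (Fin n) ℝ}

theorem vectorSpan_feasBPD'_le_ker {d : Fin k → ℝ} (heq : ∀ x, FeasBP A b x → M *ᵥ x = d) :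
    vectorSpan ℝ {p : (Fin n → ℝ) × (Fin n → ℝ) × (Fin n → ℝ) | FeasBPD' A b p.1 p.2.1 p.2.2} ≤
      LinearMap.ker (pairMulVecLin M) := by
  rw [vectorSpan_def, Submodule.span_le]
  rintro _ ⟨p, hp, q, hq, rfl⟩
  simp [pairMulVecLin_apply, Matrix.mulVec_sub, heq _ hp.1, heq _ hq.1, heq _ hp.2.1,
    heq _ hq.2.1]

theorem ker_le_vectorSpan_feasBPD' {xb yb : Fin n → ℝ} (hxb : FeasBP A b xb)
    (hyb : FeasBP A b yb) (hxy : ∀ i, xb i + yb i ≤ 1)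
    (hrow : ∀ (u : Fin n → ℝ) (u₀ : ℝ), (∀ x ∈ {x | FeasBP A b x}, ∑ i, u i * x i = u₀) →
      ∃ lam, u = M.vecMul lam) :
    LinearMap.ker (pairMulVecLin M) ≤
      vectorSpan ℝ {p : (Fin n → ℝ) × (Fin n → ℝ) × (Fin n → ℝ) |
        FeasBPD' A b p.1 p.2.1 p.2.2} := by
  refine le_vectorSpan_of_forall_dual fun φ hφ w hw => ?_
  set ψ₁ := φ ∘ₗ LinearMap.inl ℝ _ _
  set ψ₂ := φ ∘ₗ LinearMap.inr ℝ _ _ ∘ₗ LinearMap.inl ℝ _ _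
  set ψ₃ := φ ∘ₗ LinearMap.inr ℝ _ _ ∘ₗ LinearMap.inr ℝ _ _
  have hsplit : φ w = ψ₁ w.1 + ψ₂ w.2.1 + ψ₃ w.2.2 := by
    simp only [ψ₁, ψ₂, ψ₃, LinearMap.comp_apply, ← map_add]
    congr 1
    ext <;> simp
  rw [LinearMap.mem_ker, pairMulVecLin_apply, Prod.mk_eq_zero] at hw
  have h₁ : ψ₁ w.1 = 0 := by
    refine Module.Dual.apply_eq_zero_of_mulVec_eq_zero hrow ψ₁ (c := ψ₁ xb) (fun x hx => ?_) hw.1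
    have := hφ (x, yb, 1) (hx.feasBPD'_one hyb) (xb, yb, 1) (hxb.feasBPD'_one hyb)
    rw [← sub_eq_zero, ← map_sub]
    simpa [ψ₁] using this
  have h₂ : ψ₂ w.2.1 = 0 := by
    refine Module.Dual.apply_eq_zero_of_mulVec_eq_zero hrow ψ₂ (c := ψ₂ yb) (fun y hy => ?_) hw.2
    have := hφ (xb, y, 1) (hxb.feasBPD'_one hy) (xb, yb, 1) (hxb.feasBPD'_one hyb)
    rw [← sub_eq_zero, ← map_sub]
    simpa [ψ₂] using this
  have h₃ : ψ₃ = 0 := by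
    refine (Pi.basisFun ℝ (Fin n)).ext fun i => ?_
    have := hφ (xb, yb, Pi.single i 1)
      (hxb.feasBPD'_of_add_le_one hyb hxy (BinaryVec.single i))
      (xb, yb, 0) (hxb.feasBPD'_of_add_le_one hyb hxy (BinaryVec.zero n))
    simpa [ψ₃] using this
  rw [hsplit, h₁, h₂, h₃, LinearMap.zero_apply, add_zero, add_zero]

theorem vectorSpan_feasBPD'_eq_ker {d : Fin k → ℝ}
    (hcomp : ∃ x y, FeasBP A b x ∧ FeasBP A b y ∧ ∀ i, x i + y i ≤ 1)
    (heq : ∀ x, FeasBP A b x → M *ᵥ x = d)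
    (hrow : ∀ (u : Fin n → ℝ) (u₀ : ℝ), (∀ x ∈ {x | FeasBP A b x}, ∑ i, u i * x i = u₀) →
      ∃ lam, u = M.vecMul lam) :
    vectorSpan ℝ {p : (Fin n → ℝ) × (Fin n → ℝ) × (Fin n → ℝ) | FeasBPD' A b p.1 p.2.1 p.2.2} =
      LinearMap.ker (pairMulVecLin M) := by
  obtain ⟨xb, yb, hxb, hyb, hxy⟩ := hcomp
  exact le_antisymm (vectorSpan_feasBPD'_le_ker heq) (ker_le_vectorSpan_feasBPD' hxb hyb hxy hrow)

end Diameter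

theorem stmt10_general {n m k : ℕ} (A : Matrix (Fin m) (Fin n) ℝ) (b : Fin m → ℝ)
    (hcomp : ∃ x y, FeasBP A b x ∧ FeasBP A b y ∧ ∀ i, x i + y i ≤ 1)
    (M : Matrix (Fin k) (Fin n) ℝ) (d : Fin k → ℝ)
    (hrank : M.rank = k)
    (heq : ∀ x, FeasBP A b x → M.mulVec x = d)
    (hmax : ∀ (u : Fin n → ℝ) (u₀ : ℝ), (∀ x, FeasBP A b x → ∑ i, u i * x i = u₀) →
      ∃ lam : Fin k → ℝ, u = M.vecMul lam ∧ u₀ = ∑ j, lam j * d j) :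
    polyDim (polyBPD' A b) = 3 * n - 2 * M.rank := by
  have hrow := fun u u₀ h => (hmax u u₀ h).imp fun _ => And.left
  rw [polyBPD', polyDim_convexHull, vectorSpan_feasBPD'_eq_ker hcomp heq hrow,
    finrank_ker_pairMulVecLin hrank, hrank]

theorem stmt10 {n m k : ℕ} (A : Matrix (Fin m) (Fin n) ℝ) (b : Fin m → ℝ)
    (hne : ∃ x, FeasBP A b x)
    (hcomp : ∃ x y, FeasBP A b x ∧ FeasBP A b y ∧ ∀ i, x i + y i ≤ 1)
    (M : Matrix (Fin k) (Fin n) ℝ) (d : Fin k → ℝ)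
    (hrank : M.rank = k)
    (heq : ∀ x, FeasBP A b x → M.mulVec x = d)
    (hmax : ∀ (u : Fin n → ℝ) (u₀ : ℝ), (∀ x, FeasBP A b x → ∑ i, u i * x i = u₀) →
      ∃ lam : Fin k → ℝ, u = M.vecMul lam ∧ u₀ = ∑ j, lam j * d j) :
    polyDim (polyBPD' A b) = 3 * n - 2 * M.rank :=
  stmt10_general A b hcomp M d hrank heq hmax
end

section
/- Suppose that for each feasible solution x̄ of BP there exists a feasible ȳ of BP with x̄ + ȳ ≤ e. Then for each i ∈ [n], the inequalities z_i ≥ 0 and z_i ≤ 1 define facets of the diameter polytope P_BPD'. -/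
open Matrix Finset

lemma face_convexHull {E : Type*} [AddCommGroup E] [Module ℝ E]
    (S : Set E) (f : E →ₗ[ℝ] ℝ) (a : ℝ) (h : ∀ s ∈ S, f s ≤ a) :
    {p ∈ convexHull ℝ S | f p = a} = convexHull ℝ {p ∈ S | f p = a} := by
  apply Set.Subset.antisymm
  · rintro p ⟨hp, hfp⟩
    rw [_root_.convexHull_eq] at hp
    obtain ⟨ι, t, w, z, hw0, hw1, hz, rfl⟩ := hp
    have hsum : f (t.centerMass w z) = ∑ k ∈ t, w k * f (z k) := by
      rw [Finset.centerMass_eq_of_sum_1 _ _ hw1, map_sum]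
      simp [smul_eq_mul]
    have hfz : ∀ k ∈ t, w k * f (z k) = w k * a := by
      apply (Finset.sum_eq_sum_iff_of_le
        (fun k hk => mul_le_mul_of_nonneg_left (h _ (hz k hk)) (hw0 k hk))).1
      rw [← hsum, hfp, ← Finset.sum_mul, hw1, one_mul]
    rw [← Finset.centerMass_filter_ne_zero z]
    apply Finset.centerMass_mem_convexHull
    · intro k hk; exact hw0 k (Finset.mem_filter.1 hk).1
    · rw [Finset.sum_filter_ne_zero, hw1]; exact one_pos
    · intro k hk
      obtain ⟨hkt, hkw⟩ := Finset.mem_filter.1 hk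
      exact ⟨hz k hkt, mul_left_cancel₀ hkw (hfz k hkt)⟩
  · intro p hp
    refine ⟨convexHull_mono (Set.sep_subset _ _) hp, ?_⟩
    exact convexHull_min (fun q hq => hq.2) (convex_hyperplane f.isLinear a) hp

lemma isFacet_of_cover {E : Type*} [AddCommGroup E] [Module ℝ E] [FiniteDimensional ℝ E]
    (S : Set E) (f : E →ₗ[ℝ] ℝ) (a : ℝ) (v : E) (hv : f v ≠ 0)
    (hval : ∀ p ∈ S, f p ≤ a)
    (hFne : {p ∈ S | f p = a}.Nonempty)
    (hvS : v ∈ vectorSpan ℝ S)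
    (hcov : ∀ s ∈ S, ∃ t : ℝ, s - t • v ∈ affineSpan ℝ {p ∈ S | f p = a}) :
    IsFacet (convexHull ℝ S) (⇑f) a := by
  set F := {p ∈ S | f p = a} with hF
  have hface : {p ∈ convexHull ℝ S | f p = a} = convexHull ℝ F :=
    face_convexHull S f a hval
  refine ⟨fun p hp => convexHull_min hval (convex_halfSpace_le f.isLinear a) hp, ?_, ?_⟩
  · obtain ⟨p0, hp0⟩ := hFne
    exact ⟨p0, subset_convexHull ℝ S hp0.1, hp0.2⟩
  · rw [hface]
    unfold polyDim
    rw [affineSpan_convexHull, affineSpan_convexHull, direction_affineSpan,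
      direction_affineSpan]
    have hWker : vectorSpan ℝ F ≤ LinearMap.ker f := by
      show Submodule.span ℝ (F -ᵥ F) ≤ _
      apply Submodule.span_le.2
      rintro u ⟨p1, hp1, p2, hp2, rfl⟩
      simp only [SetLike.mem_coe, LinearMap.mem_ker, vsub_eq_sub, map_sub, hp1.2, hp2.2, sub_self]
    have hv0 : v ≠ 0 := fun h0 => hv (by simp [h0])
    have hspan : vectorSpan ℝ S = vectorSpan ℝ F ⊔ ℝ ∙ v := by
      apply le_antisymm
      · show Submodule.span ℝ (S -ᵥ S) ≤ _
        apply Submodule.span_le.2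
        rintro u ⟨p1, hp1, p2, hp2, rfl⟩
        obtain ⟨t1, h1⟩ := hcov p1 hp1
        obtain ⟨t2, h2⟩ := hcov p2 hp2
        have key : p1 -ᵥ p2 = ((p1 - t1 • v) -ᵥ (p2 - t2 • v)) + (t1 - t2) • v := by
          simp only [vsub_eq_sub]; module
        rw [show (fun x1 x2 => x1 -ᵥ x2) p1 p2 = p1 -ᵥ p2 from rfl, key]
        refine Submodule.add_mem _ (Submodule.mem_sup_left ?_) (Submodule.mem_sup_right
          (Submodule.smul_mem _ _ (Submodule.mem_span_singleton_self v)))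
        exact (direction_affineSpan ℝ F) ▸ AffineSubspace.vsub_mem_direction h1 h2
      · exact sup_le (vectorSpan_mono ℝ (Set.sep_subset _ _))
          ((Submodule.span_singleton_le_iff_mem v _).2 hvS)
    have hinf : vectorSpan ℝ F ⊓ (ℝ ∙ v) = ⊥ := by
      rw [eq_bot_iff]
      rintro u ⟨huW, huv⟩
      obtain ⟨t, rfl⟩ := Submodule.mem_span_singleton.1 huv
      have h0 : f (t • v) = 0 := hWker huW
      rw [_root_.map_smul, smul_eq_mul] at h0
      rcases mul_eq_zero.1 h0 with h | h
      · simp [h]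
      · exact absurd h hv
    have hrk := Submodule.finrank_sup_add_finrank_inf_eq (vectorSpan ℝ F) (ℝ ∙ v)
    rw [hinf, finrank_bot, finrank_span_singleton hv0] at hrk
    rw [hspan]
    omega

def zc {n : ℕ} (i : Fin n) : ((Fin n → ℝ) × (Fin n → ℝ) × (Fin n → ℝ)) →ₗ[ℝ] ℝ where
  toFun p := p.2.2 i
  map_add' _ _ := rfl
  map_smul' _ _ := rfl

def nzc {n : ℕ} (i : Fin n) : ((Fin n → ℝ) × (Fin n → ℝ) × (Fin n → ℝ)) →ₗ[ℝ] ℝ where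
  toFun p := -(p.2.2 i)
  map_add' p q := by show -(p.2.2 i + q.2.2 i) = -(p.2.2 i) + -(q.2.2 i); ring
  map_smul' c p := by show -(c * p.2.2 i) = c * -(p.2.2 i); ring

theorem stmt12 {n m : ℕ} (A : Matrix (Fin m) (Fin n) ℝ) (b : Fin m → ℝ)
    (hne : ∃ x, FeasBP A b x)
    (hcomp : ∀ x, FeasBP A b x → ∃ y, FeasBP A b y ∧ ∀ i, x i + y i ≤ 1)
    (i : Fin n) :
    IsFacet (polyBPD' A b) (fun p => -(p.2.2 i)) 0 ∧
    IsFacet (polyBPD' A b) (fun p => p.2.2 i) 1 := by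
  classical
  obtain ⟨xb, hxb⟩ := hne
  obtain ⟨yb, hyb, hxyb⟩ := hcomp xb hxb
  set S : Set ((Fin n → ℝ) × (Fin n → ℝ) × (Fin n → ℝ)) :=
    {p | FeasBPD' A b p.1 p.2.1 p.2.2} with hSdef
  -- basic facts about binary vectors
  have bin0 : ∀ {x : Fin n → ℝ}, BinaryVec x → ∀ j, 0 ≤ x j := by
    intro x hx j; rcases hx j with h | h <;> simp [h]
  have bin1 : ∀ {x : Fin n → ℝ}, BinaryVec x → ∀ j, x j ≤ 1 := by
    intro x hx j; rcases hx j with h | h <;> simp [h]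
  have binzero : BinaryVec (0 : Fin n → ℝ) := fun _ => Or.inl rfl
  have binsingle : ∀ j : Fin n, BinaryVec (Pi.single j (1 : ℝ)) := by
    intro j k
    by_cases h : k = j
    · subst h; right; simp
    · left; simp [Pi.single_eq_of_ne h]
  have pairmem : ∀ z : Fin n → ℝ, BinaryVec z → ((xb, yb, z) :
      (Fin n → ℝ) × (Fin n → ℝ) × (Fin n → ℝ)) ∈ S := by
    intro z hz
    refine ⟨hxb, hyb, hz, fun j => ?_⟩
    have h1 := bin0 hz j
    have h2 := hxyb j
    linarith
  -- the direction vector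
  have hvS : ((0, 0, Pi.single i 1) : (Fin n → ℝ) × (Fin n → ℝ) × (Fin n → ℝ))
      ∈ vectorSpan ℝ S := by
    have h1 := pairmem (Pi.single i 1) (binsingle i)
    have h2 := pairmem 0 binzero
    have h := vsub_mem_vectorSpan ℝ h1 h2
    have e : ((xb, yb, Pi.single i (1:ℝ)) :
        (Fin n → ℝ) × (Fin n → ℝ) × (Fin n → ℝ)) -ᵥ (xb, yb, (0 : Fin n → ℝ))
        = (0, 0, Pi.single i 1) := by
      show ((xb, yb, Pi.single i (1:ℝ)) :
        (Fin n → ℝ) × (Fin n → ℝ) × (Fin n → ℝ)) - (xb, yb, (0 : Fin n → ℝ)) = _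
      simp [Prod.ext_iff]
    rwa [e] at h
  have hsub : ∀ (x y z : Fin n → ℝ) (t : ℝ),
      ((x, y, z) : (Fin n → ℝ) × (Fin n → ℝ) × (Fin n → ℝ))
        - t • ((0, 0, Pi.single i 1) : (Fin n → ℝ) × (Fin n → ℝ) × (Fin n → ℝ))
        = (x, y, z - t • (Pi.single i 1 : Fin n → ℝ)) := by
    intro x y z t
    simp [Prod.ext_iff]
  constructor
  · -- z_i ≥ 0, i.e. -(z_i) ≤ 0, is a facet
    have key : IsFacet (convexHull ℝ S) (⇑(nzc i)) 0 := by
      apply isFacet_of_cover S (nzc i) 0 (0, 0, Pi.single i 1)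
      · show -((Pi.single i 1 : Fin n → ℝ) i) ≠ 0
        simp
      · rintro ⟨x, y, z⟩ ⟨hx, hy, hzb, hcon⟩
        replace hx : FeasBP A b x := hx
        replace hy : FeasBP A b y := hy
        replace hzb : BinaryVec z := hzb
        replace hcon : ∀ j, x j + y j - z j ≤ 1 := hcon
        show -(z i) ≤ 0
        have := bin0 hzb i
        linarith
      · refine ⟨(xb, yb, 0), pairmem 0 binzero, ?_⟩
        show -((0 : Fin n → ℝ) i) = 0
        simp
      · exact hvS
      · rintro ⟨x, y, z⟩ ⟨hx, hy, hzb, hcon⟩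
        replace hx : FeasBP A b x := hx
        replace hy : FeasBP A b y := hy
        replace hzb : BinaryVec z := hzb
        replace hcon : ∀ j, x j + y j - z j ≤ 1 := hcon
        by_cases hxyi : x i = 1 ∧ y i = 1
        · -- hard case : x_i = y_i = 1, hence z_i = 1
          obtain ⟨h1i, h2i⟩ := hxyi
          obtain ⟨y', hy', hxy'⟩ := hcomp x hx
          obtain ⟨x', hx', hyx'⟩ := hcomp y hy
          have hy'i : y' i = 0 := by
            rcases hy'.1 i with h | h
            · exact h
            · exfalso; have := hxy' i; rw [h1i, h] at this; linarith
          have hx'i : x' i = 0 := by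
            rcases hx'.1 i with h | h
            · exact h
            · exfalso; have := hyx' i; rw [h2i, h] at this; linarith
          have hzi : z i = 1 := by
            rcases hzb i with h | h
            · exfalso; have := hcon i; rw [h1i, h2i, h] at this; linarith
            · exact h
          set w : Fin n → ℝ := fun j => if j = i then 0 else 1 with hwdef
          have binw : BinaryVec w := by
            intro j; by_cases hj : j = i <;> simp [hwdef, hj]
          have hq1 : ((x, y', w) : (Fin n → ℝ) × (Fin n → ℝ) × (Fin n → ℝ))
              ∈ {p ∈ S | (nzc i) p = 0} := by
            refine ⟨⟨hx, hy', binw, fun j => ?_⟩, ?_⟩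
            · by_cases hj : j = i
              · subst hj; have := hxy' j; simp [hwdef]; linarith
              · have := hxy' j; simp [hwdef, hj]; linarith
            · show -(w i) = 0; simp [hwdef]
          have hq2 : ((x', y, w) : (Fin n → ℝ) × (Fin n → ℝ) × (Fin n → ℝ))
              ∈ {p ∈ S | (nzc i) p = 0} := by
            refine ⟨⟨hx', hy, binw, fun j => ?_⟩, ?_⟩
            · by_cases hj : j = i
              · subst hj; have := hyx' j; simp [hwdef]; linarith
              · have := hyx' j; simp [hwdef, hj]; linarith
            · show -(w i) = 0; simp [hwdef]
          have hq3 : ((x', y', w) : (Fin n → ℝ) × (Fin n → ℝ) × (Fin n → ℝ))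
              ∈ {p ∈ S | (nzc i) p = 0} := by
            refine ⟨⟨hx', hy', binw, fun j => ?_⟩, ?_⟩
            · by_cases hj : j = i
              · subst hj; simp [hwdef, hx'i, hy'i]
              · have := bin1 hx'.1 j; have := bin1 hy'.1 j
                simp [hwdef, hj]; linarith
            · show -(w i) = 0; simp [hwdef]
          have esingle : ∀ j : Fin n, j ≠ i →
              ((0, 0, Pi.single j (1:ℝ)) : (Fin n → ℝ) × (Fin n → ℝ) × (Fin n → ℝ))
                ∈ vectorSpan ℝ {p ∈ S | (nzc i) p = 0} := by
            intro j hj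
            have h1 : ((xb, yb, Pi.single j (1:ℝ)) :
                (Fin n → ℝ) × (Fin n → ℝ) × (Fin n → ℝ)) ∈ {p ∈ S | (nzc i) p = 0} := by
              refine ⟨pairmem _ (binsingle j), ?_⟩
              show -((Pi.single j 1 : Fin n → ℝ) i) = 0
              simp [Pi.single_eq_of_ne (Ne.symm hj)]
            have h2 : ((xb, yb, (0 : Fin n → ℝ)) :
                (Fin n → ℝ) × (Fin n → ℝ) × (Fin n → ℝ)) ∈ {p ∈ S | (nzc i) p = 0} := by
              refine ⟨pairmem 0 binzero, ?_⟩
              show -((0 : Fin n → ℝ) i) = 0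
              simp
            have h := vsub_mem_vectorSpan ℝ h1 h2
            have e : ((xb, yb, Pi.single j (1:ℝ)) :
                (Fin n → ℝ) × (Fin n → ℝ) × (Fin n → ℝ)) -ᵥ (xb, yb, (0 : Fin n → ℝ))
                = (0, 0, Pi.single j 1) := by
              show ((xb, yb, Pi.single j (1:ℝ)) :
                (Fin n → ℝ) × (Fin n → ℝ) × (Fin n → ℝ)) - (xb, yb, (0 : Fin n → ℝ)) = _
              simp [Prod.ext_iff]
            rwa [e] at h
          set u : Fin n → ℝ := fun j => if j = i then 0 else z j - 1 with hudef
          have huspan : ((0, 0, u) : (Fin n → ℝ) × (Fin n → ℝ) × (Fin n → ℝ))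
              ∈ vectorSpan ℝ {p ∈ S | (nzc i) p = 0} := by
            have hsum : ((0, 0, u) : (Fin n → ℝ) × (Fin n → ℝ) × (Fin n → ℝ))
                = ∑ j : Fin n, u j •
                  ((0, 0, Pi.single j (1:ℝ)) : (Fin n → ℝ) × (Fin n → ℝ) × (Fin n → ℝ)) := by
              rw [Prod.ext_iff, Prod.ext_iff]
              refine ⟨?_, ?_, ?_⟩
              · simp [Prod.fst_sum, Prod.snd_sum]
              · simp [Prod.fst_sum, Prod.snd_sum]
              · show u = (∑ j : Fin n, u j •
                  ((0, 0, Pi.single j (1:ℝ)) : (Fin n → ℝ) × (Fin n → ℝ) × (Fin n → ℝ))).2.2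
                funext k
                rw [show (∑ j : Fin n, u j •
                  ((0, 0, Pi.single j (1:ℝ)) : (Fin n → ℝ) × (Fin n → ℝ) × (Fin n → ℝ))).2.2
                  = ∑ j : Fin n, u j • (Pi.single j 1 : Fin n → ℝ) from by
                    simp [Prod.snd_sum]]
                simp [Finset.sum_apply, Pi.single_apply, mul_ite]
            rw [hsum]
            refine Submodule.sum_mem _ fun j _ => ?_
            by_cases hj : j = i
            · subst hj
              have hu0 : u j = 0 := by simp [hudef]
              rw [hu0, zero_smul]
              exact Submodule.zero_mem _
            · exact Submodule.smul_mem _ _ (esingle j hj)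
          refine ⟨1, ?_⟩
          have key : ((x, y, z) : (Fin n → ℝ) × (Fin n → ℝ) × (Fin n → ℝ))
              - (1:ℝ) • ((0, 0, Pi.single i 1) : (Fin n → ℝ) × (Fin n → ℝ) × (Fin n → ℝ))
              = ((((x, y', w) : (Fin n → ℝ) × (Fin n → ℝ) × (Fin n → ℝ)) -ᵥ (x', y', w))
                  + ((0, 0, u) : (Fin n → ℝ) × (Fin n → ℝ) × (Fin n → ℝ)))
                +ᵥ ((x', y, w) : (Fin n → ℝ) × (Fin n → ℝ) × (Fin n → ℝ)) := by
            show _ = ((((x, y', w) : (Fin n → ℝ) × (Fin n → ℝ) × (Fin n → ℝ)) - (x', y', w))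
                  + ((0, 0, u) : (Fin n → ℝ) × (Fin n → ℝ) × (Fin n → ℝ)))
                + ((x', y, w) : (Fin n → ℝ) × (Fin n → ℝ) × (Fin n → ℝ))
            rw [Prod.ext_iff, Prod.ext_iff]
            refine ⟨?_, ?_, ?_⟩
            · show x - (1:ℝ) • (0 : Fin n → ℝ) = x - x' + 0 + x'
              simp
            · show y - (1:ℝ) • (0 : Fin n → ℝ) = y' - y' + 0 + y
              simp
            · show z - (1:ℝ) • (Pi.single i 1 : Fin n → ℝ) = w - w + u + w
              funext k
              by_cases hk : k = i
              · subst hk; simp [hudef, hwdef, hzi]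
              · simp [hudef, hwdef, hk, Pi.single_eq_of_ne hk]
          rw [key]
          refine AffineSubspace.vadd_mem_of_mem_direction ?_
            (subset_affineSpan ℝ _ hq2)
          rw [direction_affineSpan]
          exact Submodule.add_mem _ (vsub_mem_vectorSpan ℝ hq1 hq3) huspan
        · -- easy case : x_i + y_i ≤ 1
          have hxy1 : x i + y i ≤ 1 := by
            rcases hx.1 i with h | h
            · have := bin1 hy.1 i; rw [h]; linarith
            · rcases hy.1 i with h' | h'
              · rw [h, h']; norm_num
              · exact absurd ⟨h, h'⟩ hxyi
          refine ⟨z i, ?_⟩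
          rw [hsub]
          have hzeq : z - z i • (Pi.single i 1 : Fin n → ℝ) = fun j => if j = i then 0 else z j := by
            funext k
            by_cases hk : k = i
            · subst hk; simp
            · simp [Pi.single_eq_of_ne hk, hk]
          rw [hzeq]
          apply subset_affineSpan
          refine ⟨⟨hx, hy, fun j => ?_, fun j => ?_⟩, ?_⟩
          · by_cases hj : j = i
            · subst hj; left; simp
            · simp only [if_neg hj]; exact hzb j
          · by_cases hj : j = i
            · subst hj; simp; linarith
            · simp only [if_neg hj]; exact hcon j
          · show -((fun j => if j = i then (0:ℝ) else z j) i) = 0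
            simp
    exact key
  · -- z_i ≤ 1 is a facet
    have key : IsFacet (convexHull ℝ S) (⇑(zc i)) 1 := by
      apply isFacet_of_cover S (zc i) 1 (0, 0, Pi.single i 1)
      · show ((Pi.single i 1 : Fin n → ℝ) i) ≠ 0
        simp
      · rintro ⟨x, y, z⟩ ⟨hx, hy, hzb, hcon⟩
        replace hx : FeasBP A b x := hx
        replace hy : FeasBP A b y := hy
        replace hzb : BinaryVec z := hzb
        replace hcon : ∀ j, x j + y j - z j ≤ 1 := hcon
        show z i ≤ 1
        exact bin1 hzb i
      · refine ⟨(xb, yb, fun _ => 1), pairmem _ (fun _ => Or.inr rfl), ?_⟩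
        show (1:ℝ) = 1
        rfl
      · exact hvS
      · rintro ⟨x, y, z⟩ ⟨hx, hy, hzb, hcon⟩
        replace hx : FeasBP A b x := hx
        replace hy : FeasBP A b y := hy
        replace hzb : BinaryVec z := hzb
        replace hcon : ∀ j, x j + y j - z j ≤ 1 := hcon
        rcases hzb i with hzi | hzi
        · refine ⟨-1, ?_⟩
          rw [hsub]
          have hzeq : z - (-1:ℝ) • (Pi.single i 1 : Fin n → ℝ) = z + (Pi.single i 1 : Fin n → ℝ) := by
            funext k; simp [sub_eq_add_neg]
          rw [hzeq]
          apply subset_affineSpan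
          refine ⟨⟨hx, hy, fun j => ?_, fun j => ?_⟩, ?_⟩
          · by_cases hj : j = i
            · subst hj; right; simp [hzi]
            · rcases hzb j with h | h
              · left; simp [h, Pi.single_eq_of_ne hj]
              · right; simp [h, Pi.single_eq_of_ne hj]
          · by_cases hj : j = i
            · subst hj
              have h1 := bin1 hx.1 j
              have h2 := bin1 hy.1 j
              simp [hzi]; linarith
            · have := hcon j
              simp [Pi.single_eq_of_ne hj]; linarith
          · show (z + (Pi.single i 1 : Fin n → ℝ)) i = 1
            simp [hzi]
        · refine ⟨0, ?_⟩
          rw [hsub]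
          have hzeq : z - (0:ℝ) • (Pi.single i 1 : Fin n → ℝ) = z := by simp
          rw [hzeq]
          exact subset_affineSpan ℝ _ ⟨⟨hx, hy, hzb, hcon⟩, hzi⟩
    exact key
end

section
/- Suppose that for each feasible solution x̄ of BP there exists a feasible ȳ of BP with x̄ + ȳ ≤ e, and that for each i ∈ [n] some feasible solution x of BP has x_i = 1. Then for each i ∈ [n], the inequality x_i + y_i − z_i ≤ 1 defines a facet of the diameter polytope P_BPD'. -/
open Matrix Finset

/-! ### Auxiliary machinery -/

/-- Shorthand for the ambient space of `P_BPD'`. -/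
abbrev Vtr (n : ℕ) := (Fin n → ℝ) × (Fin n → ℝ) × (Fin n → ℝ)

lemma single_eq_smul {n : ℕ} (j : Fin n) (c : ℝ) :
    (Pi.single j c : Fin n → ℝ) = c • (Pi.single j 1 : Fin n → ℝ) := by
  funext k
  by_cases h : k = j <;> simp [Pi.single_apply, h]

lemma sum_single_smul {n : ℕ} (u : Fin n → ℝ) :
    ∑ j, u j • (Pi.single j 1 : Fin n → ℝ) = u := by
  funext k
  simp [Finset.sum_apply, Pi.single_apply, mul_ite]

/-- The linear equivalence `(v, w, u) ↦ (v, w, u + (vᵢ + wᵢ) eᵢ)`. -/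
noncomputable def psiE (n : ℕ) (i : Fin n) : Vtr n ≃ₗ[ℝ] Vtr n where
  toFun p := (p.1, p.2.1, p.2.2 + (p.1 i + p.2.1 i) • (Pi.single i 1 : Fin n → ℝ))
  invFun p := (p.1, p.2.1, p.2.2 - (p.1 i + p.2.1 i) • (Pi.single i 1 : Fin n → ℝ))
  left_inv p := by simp [Prod.ext_iff]
  right_inv p := by simp [Prod.ext_iff]
  map_add' p q := by
    simp only [Prod.fst_add, Prod.snd_add, Pi.add_apply, Prod.mk_add_mk, Prod.ext_iff]
    refine ⟨trivial, trivial, ?_⟩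
    module
  map_smul' c p := by
    simp only [Prod.smul_fst, Prod.smul_snd, Pi.smul_apply, smul_eq_mul, Prod.smul_mk,
      RingHom.id_apply, Prod.ext_iff]
    refine ⟨trivial, trivial, ?_⟩
    module

@[simp] lemma psiE_apply (n : ℕ) (i : Fin n) (p : Vtr n) :
    psiE n i p = (p.1, p.2.1, p.2.2 + (p.1 i + p.2.1 i) • (Pi.single i 1 : Fin n → ℝ)) := rfl

lemma linF {n : ℕ} (i : Fin n) :
    IsLinearMap ℝ (fun p : Vtr n => p.1 i + p.2.1 i - p.2.2 i) := by
  constructor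
  · intro p q
    show (p+q).1 i + (p+q).2.1 i - (p+q).2.2 i = _
    simp only [Prod.fst_add, Prod.snd_add, Pi.add_apply]
    ring
  · intro c p
    show (c • p).1 i + (c • p).2.1 i - (c • p).2.2 i = _
    simp only [Prod.smul_fst, Prod.smul_snd, Pi.smul_apply, smul_eq_mul]
    ring

/-- `v ↦ (v, 0, vᵢ eᵢ)`. -/
noncomputable def phiX (n : ℕ) (i : Fin n) : (Fin n → ℝ) →ₗ[ℝ] Vtr n where
  toFun v := (v, 0, v i • (Pi.single i 1 : Fin n → ℝ))
  map_add' v w := by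
    refine Prod.ext rfl (Prod.ext (by simp) ?_)
    show (v + w) i • (Pi.single i 1 : Fin n → ℝ) =
      v i • (Pi.single i 1 : Fin n → ℝ) + w i • (Pi.single i 1 : Fin n → ℝ)
    rw [Pi.add_apply, add_smul]
  map_smul' c v := by
    refine Prod.ext rfl (Prod.ext (by simp) ?_)
    show (c • v) i • (Pi.single i 1 : Fin n → ℝ) = c • (v i • (Pi.single i 1 : Fin n → ℝ))
    rw [Pi.smul_apply, smul_eq_mul, smul_smul]

/-- `w ↦ (0, w, wᵢ eᵢ)`. -/
noncomputable def phiY (n : ℕ) (i : Fin n) : (Fin n → ℝ) →ₗ[ℝ] Vtr n where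
  toFun w := (0, w, w i • (Pi.single i 1 : Fin n → ℝ))
  map_add' v w := by
    refine Prod.ext (by simp) (Prod.ext rfl ?_)
    show (v + w) i • (Pi.single i 1 : Fin n → ℝ) =
      v i • (Pi.single i 1 : Fin n → ℝ) + w i • (Pi.single i 1 : Fin n → ℝ)
    rw [Pi.add_apply, add_smul]
  map_smul' c v := by
    refine Prod.ext (by simp) (Prod.ext rfl ?_)
    show (c • v) i • (Pi.single i 1 : Fin n → ℝ) = c • (v i • (Pi.single i 1 : Fin n → ℝ))
    rw [Pi.smul_apply, smul_eq_mul, smul_smul]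

theorem stmt13 {n m : ℕ} (A : Matrix (Fin m) (Fin n) ℝ) (b : Fin m → ℝ)
    (hne : ∃ x, FeasBP A b x)
    (hcomp : ∀ x, FeasBP A b x → ∃ y, FeasBP A b y ∧ ∀ i, x i + y i ≤ 1)
    (hone : ∀ i : Fin n, ∃ x, FeasBP A b x ∧ x i = 1)
    (i : Fin n) :
    IsFacet (polyBPD' A b) (fun p => p.1 i + p.2.1 i - p.2.2 i) 1 := by
  classical
  obtain ⟨xb, hxb⟩ := hne
  obtain ⟨yb, hyb, hbc⟩ := hcomp xb hxb
  obtain ⟨xi, hxi, hxii⟩ := hone i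
  obtain ⟨yi, hyi, hic⟩ := hcomp xi hxi
  have hyii : yi i = 0 := by
    rcases hyi.1 i with h | h
    · exact h
    · exfalso; have := hic i; rw [hxii, h] at this; linarith
  have hble : ∀ {x : Fin n → ℝ}, BinaryVec x → ∀ j, x j ≤ 1 := by
    intro x hx j; rcases hx j with h | h <;> rw [h] <;> norm_num
  have hbge : ∀ {x : Fin n → ℝ}, BinaryVec x → ∀ j, 0 ≤ x j := by
    intro x hx j; rcases hx j with h | h <;> rw [h] <;> norm_num
  have hbone : BinaryVec (fun _ : Fin n => (1:ℝ)) := fun _ => Or.inr rfl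
  have hbzero : BinaryVec (0 : Fin n → ℝ) := fun _ => Or.inl rfl
  have hbsingle : ∀ j : Fin n, BinaryVec (Pi.single j 1 : Fin n → ℝ) := by
    intro j k
    by_cases h : k = j <;> simp [Pi.single_apply, h]
  -- the main players
  set f : Vtr n → ℝ := fun p => p.1 i + p.2.1 i - p.2.2 i with hf
  set ell : Vtr n →ₗ[ℝ] ℝ := IsLinearMap.mk' f (linF i) with hell
  set S : Set (Fin n → ℝ) := {x | FeasBP A b x} with hS
  set S' : Set (Vtr n) := {p | FeasBPD' A b p.1 p.2.1 p.2.2} with hS'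
  set D : Submodule ℝ (Fin n → ℝ) := vectorSpan ℝ S with hD
  set K : Submodule ℝ (Fin n → ℝ) :=
    LinearMap.ker (LinearMap.proj i : (Fin n → ℝ) →ₗ[ℝ] ℝ) with hK
  set U : Submodule ℝ (Vtr n) := D.prod (D.prod ⊤) with hU
  set U' : Submodule ℝ (Vtr n) := D.prod (D.prod K) with hU'
  set Fp : Set (Vtr n) := {p ∈ polyBPD' A b | f p = 1} with hFp
  set W : Submodule ℝ (Vtr n) := (affineSpan ℝ Fp).direction with hW
  have hPspan : affineSpan ℝ (polyBPD' A b) = affineSpan ℝ S' := by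
    rw [polyBPD']; exact affineSpan_convexHull _
  -- membership in S'
  have memS' : ∀ x y z : Fin n → ℝ, FeasBP A b x → FeasBP A b y → BinaryVec z →
      (∀ j, x j + y j - z j ≤ 1) → ((x, y, z) : Vtr n) ∈ S' :=
    fun x y z hx hy hz hc => ⟨hx, hy, hz, hc⟩
  have mA : ∀ x ∈ S, ((x, yb, fun _ => (1:ℝ)) : Vtr n) ∈ S' := by
    intro x hx
    refine memS' _ _ _ hx hyb hbone (fun j => ?_)
    show x j + yb j - 1 ≤ 1
    have := hble hx.1 j; have := hble hyb.1 j; linarith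
  have mB : ∀ y ∈ S, ((xb, y, fun _ => (1:ℝ)) : Vtr n) ∈ S' := by
    intro y hy
    refine memS' _ _ _ hxb hy hbone (fun j => ?_)
    show xb j + y j - 1 ≤ 1
    have := hble hxb.1 j; have := hble hy.1 j; linarith
  have mC : ∀ z : Fin n → ℝ, BinaryVec z → ((xb, yb, z) : Vtr n) ∈ S' := by
    intro z hz
    refine memS' _ _ _ hxb hyb hz (fun j => ?_)
    show xb j + yb j - z j ≤ 1
    have := hbc j; have := hbge hz j; linarith
  -- face integer points
  have hfaceP : ∀ p : Vtr n, p ∈ S' → f p = 1 → p ∈ Fp := by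
    intro p hp hfp
    exact ⟨subset_convexHull ℝ _ hp, hfp⟩
  have mPx : ∀ x ∈ S,
      ((x, xi, fun j => if j = i then x i else 1) : Vtr n) ∈ Fp := by
    intro x hx
    refine hfaceP _ (memS' _ _ _ hx hxi (fun j => ?_) (fun j => ?_)) ?_
    · show (if j = i then x i else 1) = 0 ∨ (if j = i then x i else 1) = 1
      by_cases h : j = i
      · rw [if_pos h]; exact hx.1 i
      · rw [if_neg h]; exact Or.inr rfl
    · show x j + xi j - (if j = i then x i else 1) ≤ 1
      by_cases h : j = i
      · subst h; rw [if_pos rfl, hxii]; linarith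
      · rw [if_neg h]
        have := hble hx.1 j; have := hble hxi.1 j; linarith
    · show x i + xi i - (if i = i then x i else 1) = 1
      rw [if_pos rfl, hxii]; ring
  have mPy : ∀ y ∈ S,
      ((xi, y, fun j => if j = i then y i else 1) : Vtr n) ∈ Fp := by
    intro y hy
    refine hfaceP _ (memS' _ _ _ hxi hy (fun j => ?_) (fun j => ?_)) ?_
    · show (if j = i then y i else 1) = 0 ∨ (if j = i then y i else 1) = 1
      by_cases h : j = i
      · rw [if_pos h]; exact hy.1 i
      · rw [if_neg h]; exact Or.inr rfl
    · show xi j + y j - (if j = i then y i else 1) ≤ 1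
      by_cases h : j = i
      · subst h; rw [if_pos rfl, hxii]; linarith
      · rw [if_neg h]
        have := hble hy.1 j; have := hble hxi.1 j; linarith
    · show xi i + y i - (if i = i then y i else 1) = 1
      rw [if_pos rfl, hxii]; ring
  have mPz : ∀ z : Fin n → ℝ, BinaryVec z → z i = 0 →
      ((xi, yi, z) : Vtr n) ∈ Fp := by
    intro z hz hzi
    refine hfaceP _ (memS' _ _ _ hxi hyi hz (fun j => ?_)) ?_
    · show xi j + yi j - z j ≤ 1
      have := hic j; have := hbge hz j; linarith
    · show xi i + yi i - z i = 1
      rw [hxii, hyii, hzi]; ring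
  -- directions in W coming from the face points
  have hWx : ∀ v ∈ D, phiX n i v ∈ W := by
    intro v hv
    have hmap : Submodule.map (phiX n i) D ≤ W := by
      rw [hD, vectorSpan_def, Submodule.map_span, Submodule.span_le]
      rintro _ ⟨d, hd, rfl⟩
      obtain ⟨p, hp, q, hq, rfl⟩ := hd
      have h1 := mPx p hp
      have h2 := mPx q hq
      have heq : phiX n i (p -ᵥ q) =
          ((p, xi, fun j => if j = i then p i else 1) : Vtr n) -ᵥ
          ((q, xi, fun j => if j = i then q i else 1) : Vtr n) := by
        show ((p - q, 0, (p - q) i • (Pi.single i 1 : Fin n → ℝ)) : Vtr n) = _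
        rw [vsub_eq_sub, Prod.mk_sub_mk, Prod.mk_sub_mk]
        refine Prod.ext rfl (Prod.ext (by simp) ?_)
        show (p - q) i • (Pi.single i 1 : Fin n → ℝ) = _
        funext k
        by_cases h : k = i <;>
          simp [Pi.single_apply, h, Pi.sub_apply]
      rw [SetLike.mem_coe, hW, heq, direction_affineSpan]
      exact vsub_mem_vectorSpan ℝ h1 h2
    exact hmap ⟨v, hv, rfl⟩
  have hWy : ∀ w ∈ D, phiY n i w ∈ W := by
    intro w hw
    have hmap : Submodule.map (phiY n i) D ≤ W := by
      rw [hD, vectorSpan_def, Submodule.map_span, Submodule.span_le]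
      rintro _ ⟨d, hd, rfl⟩
      obtain ⟨p, hp, q, hq, rfl⟩ := hd
      have h1 := mPy p hp
      have h2 := mPy q hq
      have heq : phiY n i (p -ᵥ q) =
          ((xi, p, fun j => if j = i then p i else 1) : Vtr n) -ᵥ
          ((xi, q, fun j => if j = i then q i else 1) : Vtr n) := by
        show ((0, p - q, (p - q) i • (Pi.single i 1 : Fin n → ℝ)) : Vtr n) = _
        rw [vsub_eq_sub, Prod.mk_sub_mk, Prod.mk_sub_mk]
        refine Prod.ext (by simp) (Prod.ext rfl ?_)
        show (p - q) i • (Pi.single i 1 : Fin n → ℝ) = _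
        funext k
        by_cases h : k = i <;>
          simp [Pi.single_apply, h, Pi.sub_apply]
      rw [SetLike.mem_coe, hW, heq, direction_affineSpan]
      exact vsub_mem_vectorSpan ℝ h1 h2
    exact hmap ⟨w, hw, rfl⟩
  have hWzj : ∀ j : Fin n, j ≠ i → ((0, 0, Pi.single j 1) : Vtr n) ∈ W := by
    intro j hj
    have h1 := mPz (Pi.single j 1) (hbsingle j)
      (by rw [Pi.single_apply, if_neg (Ne.symm hj)])
    have h2 := mPz 0 hbzero rfl
    have heq : ((0, 0, Pi.single j 1) : Vtr n) =
        ((xi, yi, Pi.single j 1) : Vtr n) -ᵥ ((xi, yi, 0) : Vtr n) := by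
      rw [vsub_eq_sub, Prod.mk_sub_mk, Prod.mk_sub_mk]
      refine Prod.ext (by simp) (Prod.ext (by simp) (by simp))
    rw [hW, heq, direction_affineSpan]
    exact vsub_mem_vectorSpan ℝ h1 h2
  -- the `z`-injection
  set Lz : (Fin n → ℝ) →ₗ[ℝ] Vtr n :=
    (LinearMap.inr ℝ (Fin n → ℝ) ((Fin n → ℝ) × (Fin n → ℝ))).comp
      (LinearMap.inr ℝ (Fin n → ℝ) (Fin n → ℝ)) with hLz
  have hLzapp : ∀ u : Fin n → ℝ, Lz u = ((0, 0, u) : Vtr n) := fun u => rfl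
  have hWz : ∀ u ∈ K, ((0, 0, u) : Vtr n) ∈ W := by
    intro u hu
    have hui : u i = 0 := hu
    have hrep : ((0, 0, u) : Vtr n) = ∑ j, u j • Lz (Pi.single j 1) := by
      have h := congrArg Lz (sum_single_smul u)
      rw [map_sum] at h
      simp only [_root_.map_smul] at h
      exact h.symm
    rw [hrep]
    refine Submodule.sum_mem _ (fun j _ => ?_)
    by_cases h : j = i
    · subst h
      rw [show u j = 0 from hui, zero_smul]
      exact Submodule.zero_mem _
    · exact Submodule.smul_mem _ _ (by rw [hLzapp]; exact hWzj j h)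
  -- W contains the image of U' under psiE
  have hMW : Submodule.map ((psiE n i : Vtr n ≃ₗ[ℝ] Vtr n) :
      Vtr n →ₗ[ℝ] Vtr n) U' ≤ W := by
    rintro _ ⟨p, hp, rfl⟩
    obtain ⟨hv, hw, hu⟩ := hp
    have hdecomp : (psiE n i : Vtr n →ₗ[ℝ] Vtr n) p =
        phiX n i p.1 + phiY n i p.2.1 + ((0, 0, p.2.2) : Vtr n) := by
      show ((p.1, p.2.1, p.2.2 + (p.1 i + p.2.1 i) • (Pi.single i 1 : Fin n → ℝ)) : Vtr n) = _
      show _ = ((p.1, 0, p.1 i • (Pi.single i 1 : Fin n → ℝ)) : Vtr n) +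
        ((0, p.2.1, p.2.1 i • (Pi.single i 1 : Fin n → ℝ)) : Vtr n) + ((0, 0, p.2.2) : Vtr n)
      rw [Prod.mk_add_mk, Prod.mk_add_mk, Prod.mk_add_mk, Prod.mk_add_mk]
      refine Prod.ext (by simp) (Prod.ext (by simp) ?_)
      show p.2.2 + (p.1 i + p.2.1 i) • (Pi.single i 1 : Fin n → ℝ) =
        p.1 i • (Pi.single i 1 : Fin n → ℝ) + p.2.1 i • (Pi.single i 1 : Fin n → ℝ) + p.2.2
      rw [add_smul]; abel
    rw [hdecomp]
    exact Submodule.add_mem _ (Submodule.add_mem _ (hWx _ hv) (hWy _ hw)) (hWz _ hu)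
  -- U is the direction of the affine span of the polytope
  have hUdir : (affineSpan ℝ S').direction = U := by
    apply le_antisymm
    · have hsub : affineSpan ℝ S' ≤
          AffineSubspace.mk' ((xb, yb, fun _ => (1:ℝ)) : Vtr n) U := by
        rw [affineSpan_le]
        intro q hq
        rw [SetLike.mem_coe, AffineSubspace.mem_mk']
        refine ⟨?_, ?_, trivial⟩
        · show q.1 - xb ∈ D
          rw [hD, ← vsub_eq_sub]
          exact vsub_mem_vectorSpan ℝ (hq.1 : q.1 ∈ S) hxb
        · show q.2.1 - yb ∈ D
          rw [hD, ← vsub_eq_sub]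
          exact vsub_mem_vectorSpan ℝ (hq.2.1 : q.2.1 ∈ S) hyb
      calc (affineSpan ℝ S').direction ≤
          (AffineSubspace.mk' ((xb, yb, fun _ => (1:ℝ)) : Vtr n) U).direction :=
            AffineSubspace.direction_le hsub
        _ = U := AffineSubspace.direction_mk' _ _
    · intro p hp
      obtain ⟨hv, hw, -⟩ := hp
      have hx' : ∀ v ∈ D, ((v, 0, 0) : Vtr n) ∈ (affineSpan ℝ S').direction := by
        intro v hv
        have hmap : Submodule.map (LinearMap.inl ℝ (Fin n → ℝ) ((Fin n → ℝ) × (Fin n → ℝ))) D ≤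
            (affineSpan ℝ S').direction := by
          rw [hD, vectorSpan_def, Submodule.map_span, Submodule.span_le]
          rintro _ ⟨d, hd, rfl⟩
          obtain ⟨p', hp', q', hq', rfl⟩ := hd
          have heq : (LinearMap.inl ℝ (Fin n → ℝ) ((Fin n → ℝ) × (Fin n → ℝ))) (p' -ᵥ q') =
              ((p', yb, fun _ => (1:ℝ)) : Vtr n) -ᵥ ((q', yb, fun _ => (1:ℝ)) : Vtr n) := by
            simp only [LinearMap.inl_apply, vsub_eq_sub, Prod.mk_sub_mk]
            exact Prod.ext rfl (Prod.ext (by simp) (by simp))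
          rw [SetLike.mem_coe, heq, direction_affineSpan]
          exact vsub_mem_vectorSpan ℝ (mA p' hp') (mA q' hq')
        exact hmap ⟨v, hv, rfl⟩
      have hy' : ∀ w ∈ D, ((0, w, 0) : Vtr n) ∈ (affineSpan ℝ S').direction := by
        intro w hw
        have hmap : Submodule.map ((LinearMap.inr ℝ (Fin n → ℝ) ((Fin n → ℝ) × (Fin n → ℝ))).comp
            (LinearMap.inl ℝ (Fin n → ℝ) (Fin n → ℝ))) D ≤ (affineSpan ℝ S').direction := by
          rw [hD, vectorSpan_def, Submodule.map_span, Submodule.span_le]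
          rintro _ ⟨d, hd, rfl⟩
          obtain ⟨p', hp', q', hq', rfl⟩ := hd
          have heq : ((LinearMap.inr ℝ (Fin n → ℝ) ((Fin n → ℝ) × (Fin n → ℝ))).comp
              (LinearMap.inl ℝ (Fin n → ℝ) (Fin n → ℝ))) (p' -ᵥ q') =
              ((xb, p', fun _ => (1:ℝ)) : Vtr n) -ᵥ ((xb, q', fun _ => (1:ℝ)) : Vtr n) := by
            simp only [LinearMap.coe_comp, Function.comp_apply, LinearMap.inl_apply,
              LinearMap.inr_apply, vsub_eq_sub, Prod.mk_sub_mk]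
            exact Prod.ext (by simp) (Prod.ext rfl (by simp))
          rw [SetLike.mem_coe, heq, direction_affineSpan]
          exact vsub_mem_vectorSpan ℝ (mB p' hp') (mB q' hq')
        exact hmap ⟨w, hw, rfl⟩
      have hz' : ∀ u : Fin n → ℝ, ((0, 0, u) : Vtr n) ∈ (affineSpan ℝ S').direction := by
        intro u
        have hzj : ∀ j : Fin n, ((0, 0, Pi.single j 1) : Vtr n) ∈ (affineSpan ℝ S').direction := by
          intro j
          have heq : ((0, 0, Pi.single j 1) : Vtr n) =
              ((xb, yb, Pi.single j 1) : Vtr n) -ᵥ ((xb, yb, 0) : Vtr n) := by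
            rw [vsub_eq_sub, Prod.mk_sub_mk, Prod.mk_sub_mk]
            exact Prod.ext (by simp) (Prod.ext (by simp) (by simp))
          rw [heq, direction_affineSpan]
          exact vsub_mem_vectorSpan ℝ (mC _ (hbsingle j)) (mC 0 hbzero)
        have hrep : ((0, 0, u) : Vtr n) = ∑ j, u j • Lz (Pi.single j 1) := by
          have h := congrArg Lz (sum_single_smul u)
          rw [map_sum] at h
          simp only [_root_.map_smul] at h
          exact h.symm
        rw [hrep]
        exact Submodule.sum_mem _ (fun j _ => Submodule.smul_mem _ _ (hzj j))
      have hdecomp : p = ((p.1, 0, 0) : Vtr n) + ((0, p.2.1, 0) : Vtr n) +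
          ((0, 0, p.2.2) : Vtr n) := by
        rw [Prod.mk_add_mk, Prod.mk_add_mk, Prod.mk_add_mk, Prod.mk_add_mk]
        exact Prod.ext (by simp) (Prod.ext (by simp) (by simp))
      rw [hdecomp]
      exact Submodule.add_mem _ (Submodule.add_mem _ (hx' _ hv) (hy' _ hw)) (hz' _)
  -- validity of the inequality
  have hvalid : ∀ p ∈ polyBPD' A b, f p ≤ 1 := by
    intro p hp
    have hsub : S' ⊆ {q : Vtr n | f q ≤ 1} := by
      intro q hq
      have := hq.2.2.2 i
      simpa [hf] using this
    have hconv : Convex ℝ {q : Vtr n | f q ≤ 1} := convex_halfSpace_le (linF i) 1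
    exact convexHull_min hsub hconv hp
  -- the point on the face
  have hpt : ((xi, xi, xi) : Vtr n) ∈ Fp := by
    refine hfaceP _ (memS' _ _ _ hxi hxi hxi.1 (fun j => ?_)) ?_
    · show xi j + xi j - xi j ≤ 1
      have := hble hxi.1 j; linarith
    · show xi i + xi i - xi i = 1
      rw [hxii]; ring
  -- upper bound for the face direction
  have hWle : W ≤ U ⊓ LinearMap.ker ell := by
    refine le_inf ?_ ?_
    · have h1 : affineSpan ℝ Fp ≤ affineSpan ℝ (polyBPD' A b) :=
        affineSpan_mono ℝ (fun p hp => hp.1)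
      have := AffineSubspace.direction_le h1
      rw [hPspan, hUdir] at this
      exact this
    · rw [hW, direction_affineSpan, vectorSpan_def]
      rw [Submodule.span_le]
      rintro d hd
      obtain ⟨p, hp, q, hq, rfl⟩ := hd
      rw [SetLike.mem_coe, LinearMap.mem_ker]
      show ell (p -ᵥ q) = 0
      have h1 : ell p = 1 := hp.2
      have h2 : ell q = 1 := hq.2
      rw [vsub_eq_sub, map_sub, h1, h2, sub_self]
  -- strictness
  have hstrict : U ⊓ LinearMap.ker ell < U := by
    refine lt_of_le_of_ne inf_le_left (fun h => ?_)
    have hmem : ((0, 0, Pi.single i 1) : Vtr n) ∈ U :=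
      ⟨Submodule.zero_mem D, Submodule.zero_mem D, trivial⟩
    rw [← h, Submodule.mem_inf] at hmem
    have := hmem.2
    rw [LinearMap.mem_ker] at this
    have hval : ell ((0, 0, Pi.single i 1) : Vtr n) = -1 := by
      show (0:Fin n → ℝ) i + (0:Fin n → ℝ) i - (Pi.single i 1 : Fin n → ℝ) i = -1
      simp
    rw [hval] at this
    norm_num at this
  -- finrank bookkeeping
  have hfinW : Module.finrank ℝ W < Module.finrank ℝ U :=
    lt_of_le_of_lt (Submodule.finrank_mono hWle) (Submodule.finrank_lt_finrank_of_lt hstrict)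
  have hfinM : Module.finrank ℝ U' ≤ Module.finrank ℝ W := by
    have := Submodule.finrank_mono hMW
    rwa [LinearEquiv.finrank_map_eq (psiE n i) U'] at this
  have hUsup : Module.finrank ℝ U ≤ Module.finrank ℝ U' + 1 := by
    set sp : Submodule ℝ (Vtr n) := ℝ ∙ ((0, 0, Pi.single i 1) : Vtr n) with hsp
    have hle : U ≤ U' ⊔ sp := by
      intro p hp
      obtain ⟨hv, hw, -⟩ := hp
      have hdec : p = ((p.1, p.2.1, p.2.2 - p.2.2 i • (Pi.single i 1 : Fin n → ℝ)) : Vtr n) +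
          p.2.2 i • ((0, 0, Pi.single i 1) : Vtr n) := by
        rw [Prod.smul_mk, Prod.smul_mk, Prod.mk_add_mk, Prod.mk_add_mk]
        refine Prod.ext (by simp) (Prod.ext (by simp) (by abel_nf))
      rw [hdec]
      refine Submodule.add_mem _ (Submodule.mem_sup_left ⟨hv, hw, ?_⟩)
        (Submodule.mem_sup_right (Submodule.smul_mem _ _ (Submodule.mem_span_singleton_self _)))
      show (p.2.2 - p.2.2 i • (Pi.single i 1 : Fin n → ℝ)) i = 0
      simp
    have h1 := Submodule.finrank_mono hle
    have h2 := Submodule.finrank_sup_add_finrank_inf_eq U' sp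
    have h3 : Module.finrank ℝ sp = 1 := by
      rw [hsp]
      apply finrank_span_singleton
      intro h
      have : ((0, 0, Pi.single i 1) : Vtr n).2.2 i = (0 : Vtr n).2.2 i := by rw [h]
      simpa using this
    omega
  -- conclusion
  refine ⟨hvalid, ⟨_, hpt⟩, ?_⟩
  have hPdim : polyDim (polyBPD' A b) = Module.finrank ℝ U := by
    rw [polyDim, hPspan, hUdir]
  have hFdim : polyDim Fp = Module.finrank ℝ W := rfl
  rw [show ({p ∈ polyBPD' A b | (fun p : Vtr n => p.1 i + p.2.1 i - p.2.2 i) p = 1}) = Fp from rfl]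
  rw [hFdim, hPdim]
  omega
end
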